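/- Let s, t > 0, let F : ℝ^d × ℝ^d → [0, ∞) and G : ℝ^d × ℝ^d × ℝ^d × ℝ^d → [0, ∞) be measurable. Assume: (a) there exist C₀, r₁ > 0 such that F(y, η) ≤ C₀ e^{r₁(|y|^{1/t} + |η|^{1/s})} for all (y, η); (b) there exists μ > 0 such that for every b > 0 there exists C_b > 0 with G(z₁, z₂, ζ₁, ζ₂) ≤ C_b e^{μ(|z₁|^{1/t} + |z₂|^{1/s}) − b(|ζ₁|^{1/s} + |ζ₂|^{1/t})} for all z₁, z₂, ζ₁, ζ₂ ∈ ℝ^d; (c) V ⊆ ℝ^{2d} is a set such that for every r > 0 the supremum over λ > 0 and (x, ξ) ∈ V of e^{r λ} F(λ^t x, λ^s ξ) is finite. Let U ⊆ ℝ^{2d} be bounded and let ε ∈ (0,1] satisfy U + B_ε ⊆ V, with B_ε the open ball of radius ε in ℝ^{2d}. Then for every r > 0 the supremum over λ > 0 and (x, ξ) ∈ U of e^{r λ} ∫∫_{ℝ^d × ℝ^d} F(λ^t x − y, λ^s ξ − η) · G(λ^t x − y/2, λ^s ξ − η/2, η, −y) dy dη is finite. (This is the analytic core of the microlocality theorem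 WF^{t,s}(a^w(x,D)u) ⊆ WF^{t,s}(u) for symbols a in the class Γ_{t,s}^{s,t;0}: F plays the role of |V_φ u| and G of |V_Φ a|.) -/

import Mathlib

open MeasureTheory

/-!
The weight `W(y, η) = |y|^{1/t} + |η|^{1/s}` (`anisoWeight t s`) is homogeneous of degree one for
the dilation `(x, ξ) ↦ (λ^t x, λ^s ξ)` and subadditive up to a constant. Fix `(x, ξ) ∈ U` and a
shift `w = (y, η)`. If `W(w) < c λ` for a small `c > 0`, then `(λ^t x - y, λ^s ξ - η)` is the dilate
of a point of `U + B_ε ⊆ V`, where `F` decays like `e^{-rλ}`; otherwise `λ ≤ W(w) / c` and the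
growth bound on `F` costs only a factor `e^{β W(w)}`. Either way `e^{rλ} F ≤ C e^{β W(w)}`, while
`G` at the matching point is `O(e^{κλ - b W(w)})` for every `b`, with `κ` independent of `b`.
Running the first bound with `r + κ` and the second with `b = β + 1` bounds the integrand by
`C e^{-W(w)}`, which is integrable uniformly in `λ` and `(x, ξ)`.
-/

open Bornology Real

lemma Real.add_rpow_le_two_rpow_mul_rpow_add_rpow {p a b : ℝ} (hp : 0 ≤ p) (ha : 0 ≤ a)
    (hb : 0 ≤ b) : (a + b) ^ p ≤ 2 ^ p * (a ^ p + b ^ p) := by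
  have hmax : 0 ≤ max a b := le_max_of_le_left ha
  calc (a + b) ^ p ≤ (2 * max a b) ^ p := by
        gcongr
        linarith [le_max_left a b, le_max_right a b]
    _ = 2 ^ p * max a b ^ p := mul_rpow zero_le_two hmax
    _ ≤ 2 ^ p * (a ^ p + b ^ p) := by
        gcongr
        rcases le_total a b with h | h
        · simpa [max_eq_right h] using rpow_nonneg ha p
        · simpa [max_eq_left h] using rpow_nonneg hb p

lemma norm_add_rpow_le {E : Type*} [SeminormedAddCommGroup E] {p : ℝ} (hp : 0 ≤ p) (x y : E) :
    ‖x + y‖ ^ p ≤ 2 ^ p * (‖x‖ ^ p + ‖y‖ ^ p) :=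
  (rpow_le_rpow (norm_nonneg _) (norm_add_le x y) hp).trans
    (add_rpow_le_two_rpow_mul_rpow_add_rpow hp (norm_nonneg x) (norm_nonneg y))

section AnisoWeight

variable {E F : Type*} [NormedAddCommGroup E] [NormedAddCommGroup F]

noncomputable def anisoWeight (t s : ℝ) (p : E × F) : ℝ := ‖p.1‖ ^ (1 / t) + ‖p.2‖ ^ (1 / s)

lemma anisoWeight_nonneg (t s : ℝ) (p : E × F) : 0 ≤ anisoWeight t s p := by
  unfold anisoWeight; positivity

@[simp]
lemma anisoWeight_neg (t s : ℝ) (p : E × F) : anisoWeight t s (-p) = anisoWeight t s p := by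
  simp [anisoWeight]

variable {t s : ℝ}

lemma anisoWeight_add_le (ht : 0 ≤ t) (hs : 0 ≤ s) (p q : E × F) :
    anisoWeight t s (p + q) ≤
      (2 ^ (1 / t) + 2 ^ (1 / s)) * (anisoWeight t s p + anisoWeight t s q) := by
  have h₁ := norm_add_rpow_le (one_div_nonneg.2 ht) p.1 q.1
  have h₂ := norm_add_rpow_le (one_div_nonneg.2 hs) p.2 q.2
  unfold anisoWeight
  simp only [Prod.fst_add, Prod.snd_add]
  nlinarith [rpow_pos_of_pos two_pos (1 / t), rpow_pos_of_pos two_pos (1 / s),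
    rpow_nonneg (norm_nonneg p.1) (1 / t), rpow_nonneg (norm_nonneg q.1) (1 / t),
    rpow_nonneg (norm_nonneg p.2) (1 / s), rpow_nonneg (norm_nonneg q.2) (1 / s)]

lemma exists_anisoWeight_le_of_isBounded (ht : 0 ≤ t) (hs : 0 ≤ s) {U : Set (E × F)}
    (hU : IsBounded U) : ∃ R, 0 ≤ R ∧ ∀ p ∈ U, anisoWeight t s p ≤ R := by
  obtain ⟨C, hC, hUC⟩ := hU.exists_pos_norm_le
  refine ⟨C ^ (1 / t) + C ^ (1 / s), by positivity, fun p hp => ?_⟩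
  have hp := hUC p hp
  unfold anisoWeight
  gcongr
  exacts [(norm_fst_le p).trans hp, (norm_snd_le p).trans hp]

lemma exists_norm_lt_of_anisoWeight_lt (ht : 0 < t) (hs : 0 < s) {ε : ℝ} (hε : 0 < ε) :
    ∃ η > 0, ∀ q : E × F, anisoWeight t s q < η → ‖q‖ < ε := by
  refine ⟨min (ε ^ (1 / t)) (ε ^ (1 / s)), by positivity, fun q hq => ?_⟩
  unfold anisoWeight at hq
  have h₁ : ‖q.1‖ ^ (1 / t) < ε ^ (1 / t) := by
    linarith [rpow_nonneg (norm_nonneg q.2) (1 / s), min_le_left (ε ^ (1 / t)) (ε ^ (1 / s))]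
  have h₂ : ‖q.2‖ ^ (1 / s) < ε ^ (1 / s) := by
    linarith [rpow_nonneg (norm_nonneg q.1) (1 / t), min_le_right (ε ^ (1 / t)) (ε ^ (1 / s))]
  rw [rpow_lt_rpow_iff (norm_nonneg _) hε.le (by positivity)] at h₁ h₂
  exact max_lt h₁ h₂

variable [NormedSpace ℝ E] [NormedSpace ℝ F]

lemma anisoWeight_smul_le (ht : 0 ≤ t) (hs : 0 ≤ s) {c : ℝ} (hc : ‖c‖ ≤ 1) (p : E × F) :
    anisoWeight t s (c • p) ≤ anisoWeight t s p := by
  unfold anisoWeight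
  simp only [Prod.smul_fst, Prod.smul_snd, norm_smul]
  gcongr <;> exact mul_le_of_le_one_left (norm_nonneg _) hc

lemma anisoWeight_dilate (ht : t ≠ 0) (hs : s ≠ 0) {lam : ℝ} (hlam : 0 ≤ lam) (p : E × F) :
    anisoWeight t s (lam ^ t • p.1, lam ^ s • p.2) = lam * anisoWeight t s p := by
  simp only [anisoWeight, norm_smul, norm_of_nonneg (rpow_nonneg hlam _),
    mul_rpow (rpow_nonneg hlam _) (norm_nonneg _), one_div, rpow_rpow_inv hlam ht,
    rpow_rpow_inv hlam hs]
  ring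

lemma anisoWeight_dilate_sub_le (ht : 0 < t) (hs : 0 < s) {lam : ℝ} (hlam : 0 ≤ lam)
    (p w : E × F) :
    anisoWeight t s (lam ^ t • p.1 - w.1, lam ^ s • p.2 - w.2) ≤
      (2 ^ (1 / t) + 2 ^ (1 / s)) * (lam * anisoWeight t s p + anisoWeight t s w) := by
  have hsplit : (lam ^ t • p.1 - w.1, lam ^ s • p.2 - w.2) = (lam ^ t • p.1, lam ^ s • p.2) + -w :=
    by ext <;> simp [sub_eq_add_neg]
  rw [hsplit, ← anisoWeight_dilate ht.ne' hs.ne' hlam, ← anisoWeight_neg t s w]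
  exact anisoWeight_add_le ht.le hs.le _ _

lemma exists_mem_dilate_eq_dilate_sub (ht : t ≠ 0) (hs : s ≠ 0) {V : Set (E × F)} {p w : E × F}
    {η lam : ℝ} (hlam : 0 < lam) (hp : ∀ q, anisoWeight t s q < η → p + q ∈ V)
    (hw : anisoWeight t s w < η * lam) :
    ∃ p' ∈ V, (lam ^ t • p'.1, lam ^ s • p'.2) = (lam ^ t • p.1 - w.1, lam ^ s • p.2 - w.2) := by
  have hlt : lam ^ t ≠ 0 := (rpow_pos_of_pos hlam t).ne'
  have hls : lam ^ s ≠ 0 := (rpow_pos_of_pos hlam s).ne'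
  refine ⟨p + -(lam⁻¹ ^ t • w.1, lam⁻¹ ^ s • w.2), hp _ ?_, ?_⟩
  · rw [anisoWeight_neg, anisoWeight_dilate ht hs (inv_nonneg.2 hlam.le), inv_mul_lt_iff₀ hlam,
      mul_comm]
    exact hw
  · simp [inv_rpow hlam.le, smul_add, smul_smul, hlt, hls, sub_eq_add_neg]

theorem exists_exp_mul_le_exp_anisoWeight (ht : 0 < t) (hs : 0 < s) {f : E × F → ℝ}
    {C₀ r₁ : ℝ} (hC₀ : 0 ≤ C₀) (hr₁ : 0 ≤ r₁) (hf : ∀ z, f z ≤ C₀ * exp (r₁ * anisoWeight t s z))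
    {U V : Set (E × F)} (hU : IsBounded U) {δ : ℝ} (hδ : 0 < δ)
    (hUV : ∀ p ∈ U, ∀ q, ‖q‖ < δ → p + q ∈ V) {r C₁ : ℝ} (hr : 0 ≤ r)
    (hV : ∀ lam, 0 < lam → ∀ p ∈ V, exp (r * lam) * f (lam ^ t • p.1, lam ^ s • p.2) ≤ C₁) :
    ∃ C β, 0 ≤ β ∧ ∀ lam, 0 < lam → ∀ p ∈ U, ∀ w : E × F,
      exp (r * lam) * f (lam ^ t • p.1 - w.1, lam ^ s • p.2 - w.2) ≤
        C * exp (β * anisoWeight t s w) := by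
  obtain ⟨R, hR, hUR⟩ := exists_anisoWeight_le_of_isBounded ht.le hs.le hU
  obtain ⟨η, hη, hηδ⟩ := exists_norm_lt_of_anisoWeight_lt (E := E) (F := F) ht hs hδ
  set K : ℝ := 2 ^ (1 / t) + 2 ^ (1 / s)
  set A := r + r₁ * K * R with hA_def
  have hA : 0 ≤ A := by positivity
  refine ⟨max C₁ C₀, A / η + r₁ * K, by positivity, fun lam hlam p hp w => ?_⟩
  have hW := anisoWeight_nonneg t s w
  have hC : 0 ≤ max C₁ C₀ := hC₀.trans (le_max_right _ _)
  rcases lt_or_ge (anisoWeight t s w) (η * lam) with hnear | hfar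
  · obtain ⟨p', hp'V, hp'⟩ :=
      exists_mem_dilate_eq_dilate_sub ht.ne' hs.ne' hlam (fun q hq => hUV p hp q (hηδ q hq)) hnear
    calc exp (r * lam) * f (lam ^ t • p.1 - w.1, lam ^ s • p.2 - w.2)
        = exp (r * lam) * f (lam ^ t • p'.1, lam ^ s • p'.2) := by rw [hp']
      _ ≤ max C₁ C₀ := (hV lam hlam p' hp'V).trans (le_max_left _ _)
      _ ≤ max C₁ C₀ * exp ((A / η + r₁ * K) * anisoWeight t s w) :=
        le_mul_of_one_le_right hC (one_le_exp (by positivity))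
  · have hlamW : A * lam ≤ A / η * anisoWeight t s w := by
      rw [div_mul_eq_mul_div, le_div_iff₀ hη]; nlinarith
    have hshift : anisoWeight t s (lam ^ t • p.1 - w.1, lam ^ s • p.2 - w.2) ≤
        K * (lam * R + anisoWeight t s w) :=
      (anisoWeight_dilate_sub_le ht hs hlam.le p w).trans (by gcongr; exact hUR p hp)
    calc exp (r * lam) * f (lam ^ t • p.1 - w.1, lam ^ s • p.2 - w.2)
        ≤ exp (r * lam) * (C₀ * exp (r₁ * (K * (lam * R + anisoWeight t s w)))) := by
          gcongr
          exact (hf _).trans (by gcongr)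
      _ = C₀ * exp (A * lam + r₁ * K * anisoWeight t s w) := by
          rw [mul_left_comm, ← exp_add, hA_def]; ring_nf
      _ ≤ max C₁ C₀ * exp ((A / η + r₁ * K) * anisoWeight t s w) := by
          gcongr
          · exact le_max_right _ _
          · linarith

theorem exists_exp_neg_mul_le_exp_neg_anisoWeight (ht : 0 < t) (hs : 0 < s)
    {g : E × F × F × E → ℝ} {μ : ℝ} (hμ : 0 ≤ μ)
    (hg : ∀ b, 0 < b → ∃ C, 0 < C ∧ ∀ z₁ z₂ ζ₁ ζ₂,
      g (z₁, z₂, ζ₁, ζ₂) ≤ C * exp (μ * anisoWeight t s (z₁, z₂) - b * anisoWeight s t (ζ₁, ζ₂)))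
    {U : Set (E × F)} (hU : IsBounded U) :
    ∃ κ, 0 ≤ κ ∧ ∀ b, 0 < b → ∃ C, ∀ lam, 0 < lam → ∀ p ∈ U, ∀ w : E × F,
      exp (-(κ * lam)) *
          g (lam ^ t • p.1 - (2 : ℝ)⁻¹ • w.1, lam ^ s • p.2 - (2 : ℝ)⁻¹ • w.2, w.2, -w.1) ≤
        C * exp (-(b * anisoWeight t s w)) := by
  obtain ⟨R, hR, hUR⟩ := exists_anisoWeight_le_of_isBounded ht.le hs.le hU
  set K : ℝ := 2 ^ (1 / t) + 2 ^ (1 / s)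
  refine ⟨μ * K * R, by positivity, fun b hb => ?_⟩
  obtain ⟨C, hC, hgC⟩ := hg (b + μ * K) (by positivity)
  refine ⟨C, fun lam hlam p hp w => ?_⟩
  have hshift : anisoWeight t s (lam ^ t • p.1 - (2 : ℝ)⁻¹ • w.1, lam ^ s • p.2 - (2 : ℝ)⁻¹ • w.2)
      ≤ K * (lam * R + anisoWeight t s w) := by
    refine (anisoWeight_dilate_sub_le ht hs hlam.le p ((2 : ℝ)⁻¹ • w)).trans ?_
    gcongr
    · exact hUR p hp
    · exact anisoWeight_smul_le ht.le hs.le (by norm_num) w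
  have hswap : anisoWeight s t (w.2, -w.1) = anisoWeight t s w := by
    simp [anisoWeight, add_comm]
  calc exp (-(μ * K * R * lam)) *
        g (lam ^ t • p.1 - (2 : ℝ)⁻¹ • w.1, lam ^ s • p.2 - (2 : ℝ)⁻¹ • w.2, w.2, -w.1)
      ≤ exp (-(μ * K * R * lam)) *
          (C * exp (μ * (K * (lam * R + anisoWeight t s w)) -
            (b + μ * K) * anisoWeight t s w)) := by
        gcongr
        refine (hgC _ _ _ _).trans ?_
        rw [hswap]
        gcongr
    _ = C * exp (-(b * anisoWeight t s w)) := by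
        rw [mul_left_comm, ← exp_add]; ring_nf

end AnisoWeight

lemma integrable_exp_neg_rpow_norm {E : Type*} [NormedAddCommGroup E] [NormedSpace ℝ E]
    [FiniteDimensional ℝ E] [MeasurableSpace E] [BorelSpace E] (μ : Measure E)
    [μ.IsAddHaarMeasure] {p : ℝ} (hp : 0 < p) : Integrable (fun x => exp (-‖x‖ ^ p)) μ := by
  rcases subsingleton_or_nontrivial E with hE | hE
  · exact Integrable.of_finite
  · rw [integrable_fun_norm_addHaar μ (f := fun y => exp (-y ^ p))]
    have := integrableOn_rpow_mul_exp_neg_mul_rpow (s := ((Module.finrank ℝ E - 1 : ℕ) : ℝ))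
      (neg_one_lt_zero.trans_le (Nat.cast_nonneg _)) hp one_pos
    simpa [rpow_natCast] using this

lemma integrable_exp_neg_anisoWeight {E F : Type*} [NormedAddCommGroup E] [NormedSpace ℝ E]
    [FiniteDimensional ℝ E] [MeasurableSpace E] [BorelSpace E] [NormedAddCommGroup F]
    [NormedSpace ℝ F] [FiniteDimensional ℝ F] [MeasurableSpace F] [BorelSpace F]
    (μ : Measure E) [μ.IsAddHaarMeasure] (ν : Measure F) [ν.IsAddHaarMeasure] {t s : ℝ}
    (ht : 0 < t) (hs : 0 < s) :
    Integrable (fun w : E × F => exp (-anisoWeight t s w)) (μ.prod ν) := by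
  have := (integrable_exp_neg_rpow_norm μ (one_div_pos.2 ht)).mul_prod
    (integrable_exp_neg_rpow_norm ν (one_div_pos.2 hs))
  simpa [anisoWeight, neg_add, exp_add, mul_comm] using this

lemma exp_mul_integral_mul_le {α : Type*} [MeasurableSpace α] {μ : Measure α}
    {φ ψ W : α → ℝ} {a k β Cφ Cψ : ℝ} (hφ₀ : ∀ w, 0 ≤ φ w) (hψ₀ : ∀ w, 0 ≤ ψ w)
    (hφ : ∀ w, exp (a + k) * φ w ≤ Cφ * exp (β * W w))
    (hψ : ∀ w, exp (-k) * ψ w ≤ Cψ * exp (-((β + 1) * W w)))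
    (hW : Integrable (fun w => exp (-W w)) μ) :
    exp a * ∫ w, φ w * ψ w ∂μ ≤ Cφ * Cψ * ∫ w, exp (-W w) ∂μ := by
  have hpointwise : ∀ w, exp a * (φ w * ψ w) ≤ Cφ * Cψ * exp (-W w) := fun w =>
    calc exp a * (φ w * ψ w) = (exp (a + k) * φ w) * (exp (-k) * ψ w) := by
          rw [mul_mul_mul_comm, ← exp_add]; ring_nf
      _ ≤ (Cφ * exp (β * W w)) * (Cψ * exp (-((β + 1) * W w))) :=
          mul_le_mul (hφ w) (hψ w) (mul_nonneg (exp_nonneg _) (hψ₀ w))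
            ((mul_nonneg (exp_nonneg _) (hφ₀ w)).trans (hφ w))
      _ = Cφ * Cψ * exp (-W w) := by
          rw [mul_mul_mul_comm, ← exp_add]; ring_nf
  rw [← integral_const_mul, ← integral_const_mul]
  exact integral_mono_of_nonneg (.of_forall fun w => mul_nonneg (exp_nonneg _)
    (mul_nonneg (hφ₀ w) (hψ₀ w))) (hW.const_mul _) (.of_forall hpointwise)

theorem microlocality_core_general (d : ℕ) (s t : ℝ) (hs : 0 < s) (ht : 0 < t)
    (F : EuclideanSpace ℝ (Fin d) × EuclideanSpace ℝ (Fin d) → ℝ)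
    (G : EuclideanSpace ℝ (Fin d) × EuclideanSpace ℝ (Fin d) ×
         EuclideanSpace ℝ (Fin d) × EuclideanSpace ℝ (Fin d) → ℝ)
    (hF0 : ∀ z, 0 ≤ F z) (hG0 : ∀ z, 0 ≤ G z)
    (ha : ∃ C₀ : ℝ, 0 < C₀ ∧ ∃ r₁ : ℝ, 0 < r₁ ∧ ∀ z,
      F z ≤ C₀ * Real.exp (r₁ * (‖z.1‖ ^ (1 / t) + ‖z.2‖ ^ (1 / s))))
    (hbG : ∃ μ : ℝ, 0 < μ ∧ ∀ b : ℝ, 0 < b → ∃ C : ℝ, 0 < C ∧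
      ∀ z₁ z₂ ζ₁ ζ₂ : EuclideanSpace ℝ (Fin d),
        G (z₁, z₂, ζ₁, ζ₂) ≤ C * Real.exp (μ * (‖z₁‖ ^ (1 / t) + ‖z₂‖ ^ (1 / s)) -
          b * (‖ζ₁‖ ^ (1 / s) + ‖ζ₂‖ ^ (1 / t))))
    (U V : Set (EuclideanSpace ℝ (Fin d) × EuclideanSpace ℝ (Fin d)))
    (hc : ∀ r : ℝ, 0 < r → ∃ C : ℝ, ∀ lam : ℝ, 0 < lam → ∀ p ∈ V,
      Real.exp (r * lam) * F (lam ^ t • p.1, lam ^ s • p.2) ≤ C)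
    (hU : Bornology.IsBounded U) (ε : ℝ) (hε : 0 < ε)
    (hUV : ∀ p ∈ U, ∀ q : EuclideanSpace ℝ (Fin d) × EuclideanSpace ℝ (Fin d),
      ‖q.1‖ ^ 2 + ‖q.2‖ ^ 2 < ε ^ 2 → p + q ∈ V) :
    ∀ r : ℝ, 0 < r → ∃ C : ℝ, ∀ lam : ℝ, 0 < lam → ∀ p ∈ U,
      Real.exp (r * lam) *
        (∫ w : EuclideanSpace ℝ (Fin d) × EuclideanSpace ℝ (Fin d),
          F (lam ^ t • p.1 - w.1, lam ^ s • p.2 - w.2) *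
            G (lam ^ t • p.1 - (2 : ℝ)⁻¹ • w.1, lam ^ s • p.2 - (2 : ℝ)⁻¹ • w.2,
               w.2, -w.1)) ≤ C := by
  intro r hr
  obtain ⟨C₀, hC₀, r₁, hr₁, hF⟩ := ha
  obtain ⟨μ, hμ, hG⟩ := hbG
  have hUV' : ∀ p ∈ U, ∀ q, ‖q‖ < ε / 2 → p + q ∈ V := fun p hp q hq => hUV p hp q <| by
    have := (norm_fst_le q).trans_lt hq
    have := (norm_snd_le q).trans_lt hq
    nlinarith [norm_nonneg q.1, norm_nonneg q.2]
  obtain ⟨κ, hκ, hGκ⟩ := exists_exp_neg_mul_le_exp_neg_anisoWeight ht hs hμ.le hG hU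
  obtain ⟨C₁, hC₁⟩ := hc (r + κ) (by positivity)
  obtain ⟨CF, β, hβ, hFβ⟩ := exists_exp_mul_le_exp_anisoWeight ht hs hC₀.le hr₁.le hF hU
    (half_pos hε) hUV' (by positivity) hC₁
  obtain ⟨CG, hCG⟩ := hGκ (β + 1) (by positivity)
  refine ⟨CF * CG * ∫ w : EuclideanSpace ℝ (Fin d) × EuclideanSpace ℝ (Fin d),
    exp (-anisoWeight t s w), fun lam hlam p hp => ?_⟩
  rw [Measure.volume_eq_prod]
  exact exp_mul_integral_mul_le (fun _ => hF0 _) (fun _ => hG0 _)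
    (by simpa only [add_mul] using hFβ lam hlam p hp) (hCG lam hlam p hp)
    (integrable_exp_neg_anisoWeight volume volume ht hs)

/-- The analytic core of the microlocality theorem
`WF^{t,s}(a^w(x,D)u) ⊆ WF^{t,s}(u)` for symbols in `Γ_{t,s}^{s,t;0}`:
here `F` plays the role of `|V_φ u|` and `G` of `|V_Φ a|`. -/
theorem microlocality_core (d : ℕ) (s t : ℝ) (hs : 0 < s) (ht : 0 < t)
    (F : EuclideanSpace ℝ (Fin d) × EuclideanSpace ℝ (Fin d) → ℝ)
    (G : EuclideanSpace ℝ (Fin d) × EuclideanSpace ℝ (Fin d) ×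
         EuclideanSpace ℝ (Fin d) × EuclideanSpace ℝ (Fin d) → ℝ)
    (hFmeas : Measurable F) (hGmeas : Measurable G)
    (hF0 : ∀ z, 0 ≤ F z) (hG0 : ∀ z, 0 ≤ G z)
    (ha : ∃ C₀ : ℝ, 0 < C₀ ∧ ∃ r₁ : ℝ, 0 < r₁ ∧ ∀ z,
      F z ≤ C₀ * Real.exp (r₁ * (‖z.1‖ ^ (1 / t) + ‖z.2‖ ^ (1 / s))))
    (hbG : ∃ μ : ℝ, 0 < μ ∧ ∀ b : ℝ, 0 < b → ∃ C : ℝ, 0 < C ∧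
      ∀ z₁ z₂ ζ₁ ζ₂ : EuclideanSpace ℝ (Fin d),
        G (z₁, z₂, ζ₁, ζ₂) ≤ C * Real.exp (μ * (‖z₁‖ ^ (1 / t) + ‖z₂‖ ^ (1 / s)) -
          b * (‖ζ₁‖ ^ (1 / s) + ‖ζ₂‖ ^ (1 / t))))
    (U V : Set (EuclideanSpace ℝ (Fin d) × EuclideanSpace ℝ (Fin d)))
    (hc : ∀ r : ℝ, 0 < r → ∃ C : ℝ, ∀ lam : ℝ, 0 < lam → ∀ p ∈ V,
      Real.exp (r * lam) * F (lam ^ t • p.1, lam ^ s • p.2) ≤ C)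
    (hU : Bornology.IsBounded U) (ε : ℝ) (hε : 0 < ε) (hε1 : ε ≤ 1)
    (hUV : ∀ p ∈ U, ∀ q : EuclideanSpace ℝ (Fin d) × EuclideanSpace ℝ (Fin d),
      ‖q.1‖ ^ 2 + ‖q.2‖ ^ 2 < ε ^ 2 → p + q ∈ V) :
    ∀ r : ℝ, 0 < r → ∃ C : ℝ, ∀ lam : ℝ, 0 < lam → ∀ p ∈ U,
      Real.exp (r * lam) *
        (∫ w : EuclideanSpace ℝ (Fin d) × EuclideanSpace ℝ (Fin d),
          F (lam ^ t • p.1 - w.1, lam ^ s • p.2 - w.2) *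
            G (lam ^ t • p.1 - (2 : ℝ)⁻¹ • w.1, lam ^ s • p.2 - (2 : ℝ)⁻¹ • w.2,
               w.2, -w.1)) ≤ C :=
  microlocality_core_general d s t hs ht F G hF0 hG0 ha hbG U V hc hU ε hε hUV
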